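/- Let r ≥ 2 be an integer. In ℤ[y], define a_{r−1} = b_{r−1}, a_0 = d_{r−1} − (z_{r−1} + y)·a_{r−1}, and a_{i+1} = d_{r−1} − f_i·a_i for 0 ≤ i ≤ r − 3. Then a_i = e_i·(1 + a_{r−1} + a_{r−2} + ⋯ + a_{i+1}) − a_{i+1} for every 0 ≤ i ≤ r − 2. Consequently, for every integer y ≥ 2, each a_i evaluated at y is a positive integer. -/

import Mathlib

open Polynomial

/-- The sequence `f` in `ℤ[y]`: `f 0 = y+1`, `f 1 = y²+1`,
`f i = f (i-1) * f (i-2) + (f (i-1) - 1) * (f (i-1) - 2)` for `i ≥ 2`. -/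
noncomputable def fP : ℕ → Polynomial ℤ
  | 0 => X + 1
  | 1 => X ^ 2 + 1
  | (i + 2) => fP (i + 1) * fP i + (fP (i + 1) - 1) * (fP (i + 1) - 2)

/-- The sequence `e` in `ℤ[y]`: `e i = y · f 0 ⋯ f (i-1)`. -/
noncomputable def eP (i : ℕ) : Polynomial ℤ := X * ∏ k ∈ Finset.range i, fP k

/-- The sequence `b` in `ℤ[y]`: `b 0 = 1` and `b i = (-1)^i + f (i-1) * b (i-1)` for `i ≥ 1`. -/
noncomputable def bP : ℕ → Polynomial ℤ
  | 0 => 1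
  | (i + 1) => (-1) ^ (i + 1) + fP i * bP i

/-- The sequence `z` in `ℤ[y]`: `z 0 = y - 1`, `z 1 = y² - y + 1`,
`z i = e (i-1) * z (i-1) + z (i-2)` for `i ≥ 2`. -/
noncomputable def zP : ℕ → Polynomial ℤ
  | 0 => X - 1
  | 1 => X ^ 2 - X + 1
  | (i + 2) => eP (i + 1) * zP (i + 1) + zP i

/-- The sequence `d` in `ℤ[y]`: `d i = e i + b i * (f i - 1)`. -/
noncomputable def dP (i : ℕ) : Polynomial ℤ := eP i + bP i * (fP i - 1)

/-- The weight polynomials: `aAux r 0 = d (r-1) − (z (r-1) + y)·b (r-1)` and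
`aAux r (i+1) = d (r-1) − f i · aAux r i`. -/
noncomputable def aAux (r : ℕ) : ℕ → Polynomial ℤ
  | 0 => dP (r - 1) - (zP (r - 1) + X) * bP (r - 1)
  | (i + 1) => dP (r - 1) - fP i * aAux r i

/-- The weight polynomials `a i` (for `0 ≤ i ≤ r-1`): `a (r-1) = b (r-1)`,
`a 0 = d (r-1) − (z (r-1) + y)·a (r-1)`, and `a (i+1) = d (r-1) − f i · a i`
for `0 ≤ i ≤ r-3`. -/
lemma eP_succ (i : ℕ) : eP (i + 1) = eP i * fP i := by
  unfold eP
  rw [Finset.prod_range_succ, mul_assoc]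

lemma fP_succ_succ (i : ℕ) :
    fP (i + 2) = fP (i + 1) * fP i + (fP (i + 1) - 1) * (fP (i + 1) - 2) := rfl

lemma bP_succ (i : ℕ) : bP (i + 1) = (-1) ^ (i + 1) + fP i * bP i := rfl

lemma zP_succ_succ (i : ℕ) : zP (i + 2) = eP (i + 1) * zP (i + 1) + zP i := rfl

lemma aAux_succ (r i : ℕ) : aAux r (i + 1) = dP (r - 1) - fP i * aAux r i := rfl

lemma keyEF (i : ℕ) : eP i * fP i = fP (i + 1) + fP i - 2 := by
  induction i with
  | zero =>
    show eP 0 * fP 0 = fP 1 + fP 0 - 2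
    show eP 0 * (X + 1) = (X ^ 2 + 1) + (X + 1) - 2
    unfold eP
    simp
    ring
  | succ i ih =>
    rw [eP_succ, fP_succ_succ]
    linear_combination fP (i+1) * ih

lemma zKey : ∀ n, eP n * zP n = X * ((fP n - 1) * bP n + (-1) ^ (n + 1)) := by
  have key : ∀ n, eP n * zP n = X * ((fP n - 1) * bP n + (-1) ^ (n + 1)) ∧
      eP (n+1) * zP (n+1) = X * ((fP (n+1) - 1) * bP (n+1) + (-1) ^ (n + 2)) := by
    intro n
    induction n with
    | zero =>
      constructor
      · show eP 0 * (X - 1) = X * ((fP 0 - 1) * bP 0 + (-1) ^ 1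
)
        show eP 0 * (X - 1) = X * (((X + 1) - 1) * 1 + (-1) ^ 1)
        unfold eP; simp; ring
      · show eP 1 * (X ^ 2 - X + 1) = X * ((fP 1 - 1) * bP 1 + (-1) ^ 2)
        show eP 1 * (X ^ 2 - X + 1) = X * (((X ^ 2 + 1) - 1) * ((-1) ^ 1 + (X + 1) * 1) + (-1) ^ 2)
        unfold eP
        rw [Finset.prod_range_succ]
        show X * (1 * (X + 1)) * (X ^ 2 - X + 1) = _
        ring
    | succ n ih =>
      refine ⟨ih.2, ?_⟩
      have h1 := ih.1
      have h2 := ih.2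
      have hE1 : eP (n+1) = eP n * fP n := eP_succ n
      have hk := keyEF n
      rw [zP_succ_succ, eP_succ (n+1), fP_succ_succ, bP_succ (n+1), bP_succ n] at *
      rw [hE1] at h2 ⊢
      linear_combination (fP n * fP (n+1)) * h1 + (eP n * fP n * fP (n+1)) * h2 +
        (fP (n+1) * (X * ((fP (n+1) - 1) * ((-1:Polynomial ℤ) ^ (n+1) + fP n * bP n) + (-1) ^ (n+2)))) * hk
  exact fun n => (key n).1

lemma aAux_closed (r : ℕ) : ∀ i, (-1) ^ i * aAux r i =
    eP (r-1) * bP i + bP (r-1) * ((fP (r-1) - 1) * bP i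
      - (∏ k ∈ Finset.range i, fP k) * (zP (r-1) + X)) := by
  intro i
  induction i with
  | zero =>
    show (-1) ^ 0 * (dP (r-1) - (zP (r-1) + X) * bP (r-1)) = _
    unfold dP
    show _ = eP (r-1) * 1 + bP (r-1) * ((fP (r-1) - 1) * 1
      - (∏ k ∈ Finset.range 0, fP k) * (zP (r-1) + X))
    simp
    ring
  | succ i ih =>
    rw [aAux_succ, bP_succ, Finset.prod_range_succ]
    unfold dP
    linear_combination (fP i) * ih

lemma aAux_top (r : ℕ) : aAux r (r - 1) = bP (r - 1) := by
  set n := r - 1 with hn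
  have hC := aAux_closed r n
  have hZ := zKey n
  have hE : eP n = X * ∏ k ∈ Finset.range n, fP k := rfl
  have hX : (X : Polynomial ℤ) * (-1) ^ n ≠ 0 := by
    apply mul_ne_zero X_ne_zero
    exact pow_ne_zero _ (by norm_num)
  apply mul_left_cancel₀ hX
  calc X * (-1) ^ n * aAux r (r-1)
      = X * ((-1) ^ n * aAux r n) := by rw [hn, mul_assoc]
    _ = X * (-1) ^ n * bP (r-1) := by
        rw [hC]
        linear_combination (- bP n) * hZ + (bP n * (zP n + X)) * hE

lemma sum_Ioc_bot (g : ℕ → Polynomial ℤ) {i n : ℕ} (h : i < n) :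
    ∑ j ∈ Finset.Ioc i n, g j = g (i+1) + ∑ j ∈ Finset.Ioc (i+1) n, g j := by
  rw [← Finset.Icc_add_one_left_eq_Ioc, ← Finset.Ioc_insert_left h,
    Finset.sum_insert Finset.left_notMem_Ioc]

lemma fP_eval_ge (y : ℤ) (hy : 2 ≤ y) : ∀ i, 3 ≤ (fP i).eval y := by
  have key : ∀ i, 3 ≤ (fP i).eval y ∧ 3 ≤ (fP (i+1)).eval y := by
    intro i
    induction i with
    | zero =>
      constructor
      · show 3 ≤ (X + 1 : Polynomial ℤ).eval y
        simp; omega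
      · show 3 ≤ (X ^ 2 + 1 : Polynomial ℤ).eval y
        simp; nlinarith
    | succ i ih =>
      refine ⟨ih.2, ?_⟩
      rw [fP_succ_succ]
      simp only [eval_add, eval_mul, eval_sub, eval_one, eval_ofNat]
      nlinarith [ih.1, ih.2]
  exact fun i => (key i).1

lemma prod_fP_eval_ge (y : ℤ) (hy : 2 ≤ y) (i : ℕ) :
    1 ≤ (∏ k ∈ Finset.range i, fP k).eval y := by
  rw [eval_prod]
  calc (1:ℤ) = ∏ k ∈ Finset.range i, 1 := by simp
    _ ≤ _ := Finset.prod_le_prod (by simp) (fun k _ => by have := fP_eval_ge y hy k; omega)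

lemma eP_eval_ge (y : ℤ) (hy : 2 ≤ y) (i : ℕ) : 2 ≤ (eP i).eval y := by
  have h : (eP i).eval y = y * (∏ k ∈ Finset.range i, fP k).eval y := by
    unfold eP; simp
  rw [h]
  nlinarith [prod_fP_eval_ge y hy i]

lemma bP_eval_ge (y : ℤ) (hy : 2 ≤ y) : ∀ i, 1 ≤ (bP i).eval y := by
  intro i
  induction i with
  | zero => show 1 ≤ (1 : Polynomial ℤ).eval y; simp
  | succ i ih =>
    rw [bP_succ]
    simp only [eval_add, eval_mul, eval_pow, eval_neg, eval_one]
    have hf := fP_eval_ge y hy i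
    rcases neg_one_pow_eq_or ℤ (i+1) with h | h <;> rw [h] <;> nlinarith

lemma fP_ne_zero (i : ℕ) : fP i ≠ 0 := by
  intro h
  have := fP_eval_ge 2 le_rfl i
  rw [h] at this
  simp at this

lemma Qlem (r : ℕ) (hr : 2 ≤ r) :
    ∀ i ≤ r - 1, eP i * (1 + ∑ j ∈ Finset.Ioc i (r - 1), aAux r j)
      = dP (r - 1) - (fP i - 1) * aAux r i := by
  have main : ∀ k, k ≤ r - 1 → eP (r - 1 - k) *
      (1 + ∑ j ∈ Finset.Ioc (r - 1 - k) (r - 1), aAux r j)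
      = dP (r - 1) - (fP (r - 1 - k) - 1) * aAux r (r - 1 - k) := by
    intro k hk
    induction k with
    | zero =>
      simp only [Nat.sub_zero, Finset.Ioc_self, Finset.sum_empty, add_zero, mul_one]
      rw [aAux_top]
      unfold dP
      ring
    | succ k ihk =>
      have ih := ihk (by omega)
      set i := r - 1 - (k + 1) with hi
      have hik : r - 1 - k = i + 1 := by omega
      have hilt : i < r - 1 := by omega
      rw [hik] at ih
      rw [sum_Ioc_bot _ hilt]
      apply mul_left_cancel₀ (fP_ne_zero i)
      rw [eP_succ] at ih
      rw [aAux_succ] at ih ⊢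
      linear_combination ih + (dP (r-1) - fP i * aAux r i) * keyEF i
  intro i hi
  have := main (r - 1 - i) (by omega)
  rwa [Nat.sub_sub_self hi] at this

lemma aAux_eval_pos (r : ℕ) (hr : 2 ≤ r) (y : ℤ) (hy : 2 ≤ y) :
    ∀ i ≤ r - 1, 0 < (aAux r i).eval y := by
  have main : ∀ k, ∀ i, r - 1 - k ≤ i → i ≤ r - 1 → 0 < (aAux r i).eval y := by
    intro k
    induction k with
    | zero =>
      intro i h1 h2
      have : i = r - 1 := by omega
      rw [this, aAux_top]
      have := bP_eval_ge y hy (r-1); omega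
    | succ k ihk =>
      intro i h1 h2
      by_cases hc : r - 1 - k ≤ i
      · exact ihk i hc h2
      · have hilt : i < r - 1 := by omega
        have hq := Qlem r hr i (le_of_lt hilt)
        have hq2 := congrArg (Polynomial.eval y) hq
        rw [sum_Ioc_bot _ hilt] at hq2
        simp only [eval_mul, eval_add, eval_sub, eval_one, eval_finset_sum] at hq2
        have hca : (aAux r (i+1)).eval y
            = (dP (r-1)).eval y - (fP i).eval y * (aAux r i).eval y := by
          rw [aAux_succ]; simp
        have hpos1 : 0 < (aAux r (i+1)).eval y := ihk (i+1) (by omega) (by omega)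
        have hsum : 0 ≤ ∑ j ∈ Finset.Ioc (i+1) (r-1), (aAux r j).eval y :=
          Finset.sum_nonneg fun j hj => by
            have hj' := Finset.mem_Ioc.mp hj
            exact le_of_lt (ihk j (by omega) hj'.2)
        have hE := eP_eval_ge y hy i
        nlinarith [hq2, hca, hpos1, hsum, hE]
  intro i hi; exact main (r-1) i (by omega) hi

theorem aP_equations_and_pos' (r : ℕ) (hr : 2 ≤ r) :
    (∀ i ≤ r - 2,
      (if i = r - 1 then bP (r-1) else aAux r i) = eP i * (1 + ∑ j ∈ Finset.Ioc i (r - 1), (if j = r - 1 then bP (r-1) else aAux r j)) - (if i + 1 = r - 1 then bP (r-1) else aAux r (i+1))) ∧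
    (∀ y : ℤ, 2 ≤ y → ∀ i ≤ r - 1, 0 < ((if i = r - 1 then bP (r-1) else aAux r i)).eval y) := by
  have aP_eq : ∀ j ≤ r - 1, (if j = r - 1 then bP (r-1) else aAux r j) = aAux r j := by
    intro j hj
    split_ifs with h
    · rw [h, aAux_top]
    · rfl
  constructor
  · intro i hi
    have hi1 : i ≤ r - 1 := by omega
    have hi2 : i + 1 ≤ r - 1 := by omega
    rw [aP_eq i hi1, aP_eq (i+1) hi2]
    have hsum : ∀ j ∈ Finset.Ioc i (r-1),
        (if j = r - 1 then bP (r-1) else aAux r j) = aAux r j :=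
      fun j hj => aP_eq j (Finset.mem_Ioc.mp hj).2
    rw [Finset.sum_congr rfl hsum]
    have hq := Qlem r hr i hi1
    rw [aAux_succ]
    linear_combination -hq
  · intro y hy i hi
    rw [aP_eq i hi]
    exact aAux_eval_pos r hr y hy i hi

noncomputable def aP (r i : ℕ) : Polynomial ℤ :=
  if i = r - 1 then bP (r - 1) else aAux r i

/-- For `r ≥ 2`: the identities
`a i = e i · (1 + a (r-1) + a (r-2) + ⋯ + a (i+1)) − a (i+1)` hold for `0 ≤ i ≤ r-2`,
and consequently for every integer `y ≥ 2` each `a i` (`0 ≤ i ≤ r-1`) evaluated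
at `y` is a positive integer. -/
theorem aP_equations_and_pos (r : ℕ) (hr : 2 ≤ r) :
    (∀ i ≤ r - 2,
      aP r i = eP i * (1 + ∑ j ∈ Finset.Ioc i (r - 1), aP r j) - aP r (i + 1)) ∧
    (∀ y : ℤ, 2 ≤ y → ∀ i ≤ r - 1, 0 < (aP r i).eval y) := by
  have aP_def : ∀ i, aP r i = if i = r - 1 then bP (r - 1) else aAux r i := fun _ => rfl
  simp only [aP_def]
  exact aP_equations_and_pos' r hr
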